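/- arXiv:2112.05515 — 2 statements merged into one kernel-verified Lean document; each statement's English description precedes it below -/
import Mathlib

section
/- Cut admissibility for BI: if Δ ⊢cf ψ and Γ(ψ) ⊢cf φ are cut-free derivable, then Γ(Δ) ⊢cf φ is cut-free derivable. Consequently every sequent derivable with cut is derivable without cut. -/
/-- Formulas of BI. -/
inductive Frml : Type
  | atom : Nat → Frml
  | top : Frml
  | bot : Frml
  | emp : Frml
  | and : Frml → Frml → Frml
  | or : Frml → Frml → Frml
  | imp : Frml → Frml → Frml
  | sep : Frml → Frml → Frml
  | wand : Frml → Frml → Frml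

/-- Bunches: trees with formula leaves, multiplicative/additive units and nodes. -/
inductive Bunch : Type
  | frml : Frml → Bunch
  | mempty : Bunch    -- ∅ₘ
  | aempty : Bunch    -- ∅ₐ
  | comma : Bunch → Bunch → Bunch   -- multiplicative ','
  | semic : Bunch → Bunch → Bunch   -- additive ';'

/-- Bunched contexts: bunches with a single hole. -/
inductive BCtx : Type
  | hole : BCtx
  | commaL : BCtx → Bunch → BCtx
  | commaR : Bunch → BCtx → BCtx
  | semicL : BCtx → Bunch → BCtx
  | semicR : Bunch → BCtx → BCtx

/-- Filling the hole of a bunched context with a bunch. -/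
def BCtx.fill : BCtx → Bunch → Bunch
  | .hole, Δ => Δ
  | .commaL C Γ, Δ => .comma (C.fill Δ) Γ
  | .commaR Γ C, Δ => .comma Γ (C.fill Δ)
  | .semicL C Γ, Δ => .semic (C.fill Δ) Γ
  | .semicR Γ C, Δ => .semic Γ (C.fill Δ)

/-- Equivalence of bunches: commutative-monoid laws for (',', ∅ₘ) and (';', ∅ₐ),
under arbitrary bunched contexts. -/
inductive BEquiv : Bunch → Bunch → Prop
  | refl (Δ : Bunch) : BEquiv Δ Δ
  | symm {Δ Δ' : Bunch} : BEquiv Δ Δ' → BEquiv Δ' Δ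
  | trans {Δ₁ Δ₂ Δ₃ : Bunch} : BEquiv Δ₁ Δ₂ → BEquiv Δ₂ Δ₃ → BEquiv Δ₁ Δ₃
  | commaComm (Δ₁ Δ₂ : Bunch) : BEquiv (.comma Δ₁ Δ₂) (.comma Δ₂ Δ₁)
  | semicComm (Δ₁ Δ₂ : Bunch) : BEquiv (.semic Δ₁ Δ₂) (.semic Δ₂ Δ₁)
  | commaAssoc (Δ₁ Δ₂ Δ₃ : Bunch) :
      BEquiv (.comma Δ₁ (.comma Δ₂ Δ₃)) (.comma (.comma Δ₁ Δ₂) Δ₃)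
  | semicAssoc (Δ₁ Δ₂ Δ₃ : Bunch) :
      BEquiv (.semic Δ₁ (.semic Δ₂ Δ₃)) (.semic (.semic Δ₁ Δ₂) Δ₃)
  | commaUnit (Δ : Bunch) : BEquiv (.comma Δ .mempty) Δ
  | semicUnit (Δ : Bunch) : BEquiv (.semic Δ .aempty) Δ
  | ctx (C : BCtx) {Δ Δ' : Bunch} : BEquiv Δ Δ' → BEquiv (C.fill Δ) (C.fill Δ')

/-- Cut-free sequent calculus for BI, with the axiom rule restricted to atoms. -/
inductive Proves : Bunch → Frml → Prop
  | ax (a : Nat) : Proves (.frml (.atom a)) (.atom a)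
  | equiv {Δ Δ' : Bunch} {φ : Frml} :
      Proves Δ' φ → BEquiv Δ Δ' → Proves Δ φ
  | weaken (C : BCtx) {Δ₁ Δ₂ : Bunch} {φ : Frml} :
      Proves (C.fill Δ₁) φ → Proves (C.fill (.semic Δ₁ Δ₂)) φ
  | contract (C : BCtx) {Δ₁ : Bunch} {φ : Frml} :
      Proves (C.fill (.semic Δ₁ Δ₁)) φ → Proves (C.fill Δ₁) φ
  | empR : Proves .mempty .emp
  | empL (C : BCtx) {φ : Frml} :
      Proves (C.fill .mempty) φ → Proves (C.fill (.frml .emp)) φ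
  | sepR {Δ₁ Δ₂ : Bunch} {φ ψ : Frml} :
      Proves Δ₁ φ → Proves Δ₂ ψ → Proves (.comma Δ₁ Δ₂) (.sep φ ψ)
  | sepL (C : BCtx) {φ ψ χ : Frml} :
      Proves (C.fill (.comma (.frml φ) (.frml ψ))) χ →
      Proves (C.fill (.frml (.sep φ ψ))) χ
  | wandR {Δ : Bunch} {φ ψ : Frml} :
      Proves (.comma Δ (.frml φ)) ψ → Proves Δ (.wand φ ψ)
  | wandL (C : BCtx) {Δ₁ Δ₂ : Bunch} {φ ψ χ : Frml} :
      Proves Δ₁ φ → Proves (C.fill (.comma Δ₂ (.frml ψ))) χ →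
      Proves (C.fill (.comma (.comma Δ₁ Δ₂) (.frml (.wand φ ψ)))) χ
  | topR : Proves .aempty .top
  | topL (C : BCtx) {φ : Frml} :
      Proves (C.fill .aempty) φ → Proves (C.fill (.frml .top)) φ
  | andR {Δ₁ Δ₂ : Bunch} {φ ψ : Frml} :
      Proves Δ₁ φ → Proves Δ₂ ψ → Proves (.semic Δ₁ Δ₂) (.and φ ψ)
  | andL (C : BCtx) {φ ψ χ : Frml} :
      Proves (C.fill (.semic (.frml φ) (.frml ψ))) χ →
      Proves (C.fill (.frml (.and φ ψ))) χ
  | impR {Δ : Bunch} {φ ψ : Frml} :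
      Proves (.semic Δ (.frml φ)) ψ → Proves Δ (.imp φ ψ)
  | impL (C : BCtx) {Δ₁ Δ₂ : Bunch} {φ ψ χ : Frml} :
      Proves Δ₁ φ → Proves (C.fill (.semic Δ₂ (.frml ψ))) χ →
      Proves (C.fill (.semic (.semic Δ₁ Δ₂) (.frml (.imp φ ψ)))) χ
  | botL (C : BCtx) {φ : Frml} : Proves (C.fill (.frml .bot)) φ
  | orR1 {Δ : Bunch} {φ ψ : Frml} : Proves Δ φ → Proves Δ (.or φ ψ)
  | orR2 {Δ : Bunch} {φ ψ : Frml} : Proves Δ ψ → Proves Δ (.or φ ψ)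
  | orL (C : BCtx) {φ ψ χ : Frml} :
      Proves (C.fill (.frml φ)) χ → Proves (C.fill (.frml ψ)) χ →
      Proves (C.fill (.frml (.or φ ψ))) χ

/-- The formula collapse `⟨Δ⟩` of a bunch. -/
def Bunch.collapse : Bunch → Frml
  | .frml φ => φ
  | .mempty => .emp
  | .aempty => .top
  | .comma Δ₁ Δ₂ => .sep Δ₁.collapse Δ₂.collapse
  | .semic Δ₁ Δ₂ => .and Δ₁.collapse Δ₂.collapse

/-- BI sequent calculus with the cut rule. -/
inductive ProvesC : Bunch → Frml → Prop
  | ax (a : Nat) : ProvesC (.frml (.atom a)) (.atom a)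
  | equiv {Δ Δ' : Bunch} {φ : Frml} :
      ProvesC Δ' φ → BEquiv Δ Δ' → ProvesC Δ φ
  | weaken (C : BCtx) {Δ₁ Δ₂ : Bunch} {φ : Frml} :
      ProvesC (C.fill Δ₁) φ → ProvesC (C.fill (.semic Δ₁ Δ₂)) φ
  | contract (C : BCtx) {Δ₁ : Bunch} {φ : Frml} :
      ProvesC (C.fill (.semic Δ₁ Δ₁)) φ → ProvesC (C.fill Δ₁) φ
  | empR : ProvesC .mempty .emp
  | empL (C : BCtx) {φ : Frml} :
      ProvesC (C.fill .mempty) φ → ProvesC (C.fill (.frml .emp)) φ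
  | sepR {Δ₁ Δ₂ : Bunch} {φ ψ : Frml} :
      ProvesC Δ₁ φ → ProvesC Δ₂ ψ → ProvesC (.comma Δ₁ Δ₂) (.sep φ ψ)
  | sepL (C : BCtx) {φ ψ χ : Frml} :
      ProvesC (C.fill (.comma (.frml φ) (.frml ψ))) χ →
      ProvesC (C.fill (.frml (.sep φ ψ))) χ
  | wandR {Δ : Bunch} {φ ψ : Frml} :
      ProvesC (.comma Δ (.frml φ)) ψ → ProvesC Δ (.wand φ ψ)
  | wandL (C : BCtx) {Δ₁ Δ₂ : Bunch} {φ ψ χ : Frml} :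
      ProvesC Δ₁ φ → ProvesC (C.fill (.comma Δ₂ (.frml ψ))) χ →
      ProvesC (C.fill (.comma (.comma Δ₁ Δ₂) (.frml (.wand φ ψ)))) χ
  | topR : ProvesC .aempty .top
  | topL (C : BCtx) {φ : Frml} :
      ProvesC (C.fill .aempty) φ → ProvesC (C.fill (.frml .top)) φ
  | andR {Δ₁ Δ₂ : Bunch} {φ ψ : Frml} :
      ProvesC Δ₁ φ → ProvesC Δ₂ ψ → ProvesC (.semic Δ₁ Δ₂) (.and φ ψ)
  | andL (C : BCtx) {φ ψ χ : Frml} :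
      ProvesC (C.fill (.semic (.frml φ) (.frml ψ))) χ →
      ProvesC (C.fill (.frml (.and φ ψ))) χ
  | impR {Δ : Bunch} {φ ψ : Frml} :
      ProvesC (.semic Δ (.frml φ)) ψ → ProvesC Δ (.imp φ ψ)
  | impL (C : BCtx) {Δ₁ Δ₂ : Bunch} {φ ψ χ : Frml} :
      ProvesC Δ₁ φ → ProvesC (C.fill (.semic Δ₂ (.frml ψ))) χ →
      ProvesC (C.fill (.semic (.semic Δ₁ Δ₂) (.frml (.imp φ ψ)))) χ
  | botL (C : BCtx) {φ : Frml} : ProvesC (C.fill (.frml .bot)) φ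
  | orR1 {Δ : Bunch} {φ ψ : Frml} : ProvesC Δ φ → ProvesC Δ (.or φ ψ)
  | orR2 {Δ : Bunch} {φ ψ : Frml} : ProvesC Δ ψ → ProvesC Δ (.or φ ψ)
  | orL (C : BCtx) {φ ψ χ : Frml} :
      ProvesC (C.fill (.frml φ)) χ → ProvesC (C.fill (.frml ψ)) χ →
      ProvesC (C.fill (.frml (.or φ ψ))) χ

  | cut (C : BCtx) {Δ' : Bunch} {φ ψ : Frml} :
      ProvesC Δ' ψ → ProvesC (C.fill (.frml ψ)) φ → ProvesC (C.fill Δ') φ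


/-!
Cut elimination is proved semantically, in the style of Okada. A set `X` of bunches is closed
when it contains every bunch that can replace all members of `X` in every cut-free provable
sequent `C(-) ⊢ χ`. Closed sets, with the closures of `,`- and `;`-products and their residuals,
form a BI algebra in which the calculus with cut is sound. Interpreting each formula `φ` by a
closed set `φ.sem` with `φ ∈ φ.sem ⊆ {Δ | Δ ⊢cf φ}` (Okada's lemma), soundness turns every
derivation with cut into a cut-free one. Because the closure quantifies over all contexts `C`,
not just the empty one, products commute with closure directly and no inversion lemmas are
needed.
-/

open Set

def BCtx.comp : BCtx → BCtx → BCtx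
  | .hole, D => D
  | .commaL C Γ, D => .commaL (C.comp D) Γ
  | .commaR Γ C, D => .commaR Γ (C.comp D)
  | .semicL C Γ, D => .semicL (C.comp D) Γ
  | .semicR Γ C, D => .semicR Γ (C.comp D)

@[simp]
theorem BCtx.fill_comp (C D : BCtx) (Δ : Bunch) : (C.comp D).fill Δ = C.fill (D.fill Δ) := by
  induction C <;> simp [BCtx.comp, BCtx.fill, *]

def cl : ClosureOperator (Set Bunch) :=
  .mk₂ (fun X => {Δ | ∀ (C : BCtx) (χ : Frml),
      (∀ Δ' ∈ X, Proves (C.fill Δ') χ) → Proves (C.fill Δ) χ})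
    (fun _ Δ hΔ _ _ h => h Δ hΔ)
    (fun _ _ hXY _ hΔ C χ h => hΔ C χ fun _ hΔ' => hXY hΔ' C χ h)

theorem mem_of_mem_cl_singleton {X : Set Bunch} {Δ Δ' : Bunch} (hX : cl.IsClosed X)
    (h : Δ ∈ cl {Δ'}) (h' : Δ' ∈ X) : Δ ∈ X :=
  ClosureOperator.closure_min (singleton_subset_iff.2 h') hX h

theorem BEquiv.mem_cl_singleton {Δ Δ' : Bunch} (h : BEquiv Δ Δ') : Δ ∈ cl {Δ'} :=
  fun C _ hχ => .equiv (hχ _ rfl) (.ctx C h)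

theorem subset_cl_of_bequiv {S T : Set Bunch} (h : ∀ Δ ∈ S, ∃ Δ' ∈ T, BEquiv Δ Δ') :
    S ⊆ cl T := fun Δ hΔ => by
  obtain ⟨Δ', hΔ', e⟩ := h Δ hΔ
  exact mem_of_mem_cl_singleton (cl.isClosed_closure T) e.mem_cl_singleton (cl.le_closure T hΔ')

theorem BCtx.fill_mem_cl (D : BCtx) {X : Set Bunch} {Δ : Bunch} (h : Δ ∈ cl X) :
    D.fill Δ ∈ cl (D.fill '' X) := fun C χ hχ => by
  simpa using h (C.comp D) χ fun Δ' hΔ' => by simpa using hχ _ (mem_image_of_mem _ hΔ')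

def antecedents (φ : Frml) : Set Bunch := {Δ | Proves Δ φ}

theorem isClosed_antecedents (φ : Frml) : cl.IsClosed (antecedents φ) :=
  cl.isClosed_iff_closure_le.2 fun _ hΔ => hΔ .hole φ fun _ h => h

theorem cl_subset_antecedents {X : Set Bunch} {φ : Frml} (h : X ⊆ antecedents φ) :
    cl X ⊆ antecedents φ :=
  ClosureOperator.closure_min h (isClosed_antecedents φ)

def rightResidual (op : Bunch → Bunch → Bunch) (X Y : Set Bunch) : Set Bunch :=
  {Δ | ∀ a ∈ X, op Δ a ∈ Y}

theorem subset_rightResidual {op : Bunch → Bunch → Bunch} {X Y Z : Set Bunch}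
    (h : cl (image2 op X Y) ⊆ Z) : X ⊆ rightResidual op Y Z :=
  fun _ hx _ hy => h (cl.le_closure _ (mem_image2_of_mem hx hy))

structure IsBunchMonoid (op : Bunch → Bunch → Bunch) (e : Bunch) : Prop where
  fill_left : ∀ b, ∃ D : BCtx, D.fill = (op · b)
  comm : ∀ a b, BEquiv (op a b) (op b a)
  assoc : ∀ a b c, BEquiv (op a (op b c)) (op (op a b) c)
  unit : ∀ a, BEquiv (op a e) a

theorem isBunchMonoid_comma : IsBunchMonoid .comma .mempty :=
  ⟨fun b => ⟨.commaL .hole b, rfl⟩, .commaComm, .commaAssoc, .commaUnit⟩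

theorem isBunchMonoid_semic : IsBunchMonoid .semic .aempty :=
  ⟨fun b => ⟨.semicL .hole b, rfl⟩, .semicComm, .semicAssoc, .semicUnit⟩

namespace IsBunchMonoid

variable {op : Bunch → Bunch → Bunch} {e : Bunch}

theorem isClosed_rightResidual (h : IsBunchMonoid op e) (X : Set Bunch) {Y : Set Bunch}
    (hY : cl.IsClosed Y) : cl.IsClosed (rightResidual op X Y) := by
  refine cl.isClosed_iff_closure_le.2 fun Δ hΔ a ha => ?_
  obtain ⟨D, hD⟩ := h.fill_left a
  have := D.fill_mem_cl hΔ
  rw [hD] at this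
  refine ClosureOperator.closure_min ?_ hY this
  exact image_subset_iff.2 fun _ (hx : _ ∈ rightResidual op X Y) => hx a ha

theorem cl_image2_comm (h : IsBunchMonoid op e) (X Y : Set Bunch) :
    cl (image2 op X Y) = cl (image2 op Y X) := by
  have swap : ∀ X Y : Set Bunch, image2 op X Y ⊆ cl (image2 op Y X) := by
    refine fun X Y => subset_cl_of_bequiv ?_
    rintro _ ⟨a, ha, b, hb, rfl⟩
    exact ⟨_, mem_image2_of_mem hb ha, h.comm a b⟩
  exact le_antisymm (cl.le_closure_iff.1 (swap X Y)) (cl.le_closure_iff.1 (swap Y X))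

theorem image2_cl_left_subset (h : IsBunchMonoid op e) (X Y : Set Bunch) :
    image2 op (cl X) Y ⊆ cl (image2 op X Y) := by
  rintro _ ⟨a, ha, b, hb, rfl⟩
  obtain ⟨D, hD⟩ := h.fill_left b
  have := D.fill_mem_cl ha
  rw [hD] at this
  exact cl.monotone (image_subset_image2_left hb) this

theorem cl_image2_cl_left (h : IsBunchMonoid op e) (X Y : Set Bunch) :
    cl (image2 op (cl X) Y) = cl (image2 op X Y) :=
  le_antisymm (cl.le_closure_iff.1 (h.image2_cl_left_subset X Y))
    (cl.monotone (image2_subset_right (cl.le_closure X)))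

theorem cl_image2_cl_right (h : IsBunchMonoid op e) (X Y : Set Bunch) :
    cl (image2 op X (cl Y)) = cl (image2 op X Y) := by
  rw [h.cl_image2_comm, h.cl_image2_cl_left, h.cl_image2_comm]

theorem cl_image2_assoc (h : IsBunchMonoid op e) (X Y Z : Set Bunch) :
    cl (image2 op X (cl (image2 op Y Z))) = cl (image2 op (cl (image2 op X Y)) Z) := by
  rw [h.cl_image2_cl_right, h.cl_image2_cl_left]
  apply le_antisymm <;> refine cl.le_closure_iff.1 (subset_cl_of_bequiv ?_)
  · rintro _ ⟨a, ha, _, ⟨b, hb, c, hc, rfl⟩, rfl⟩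
    exact ⟨_, mem_image2_of_mem (mem_image2_of_mem ha hb) hc, h.assoc a b c⟩
  · rintro _ ⟨_, ⟨a, ha, b, hb, rfl⟩, c, hc, rfl⟩
    exact ⟨_, mem_image2_of_mem ha (mem_image2_of_mem hb hc), (h.assoc a b c).symm⟩

theorem cl_image2_unit (h : IsBunchMonoid op e) {X : Set Bunch} (hX : cl.IsClosed X) :
    cl (image2 op X (cl {e})) = X := by
  rw [h.cl_image2_cl_right, image2_singleton_right]
  refine le_antisymm (ClosureOperator.closure_min ?_ hX) ?_
  · refine (subset_cl_of_bequiv ?_).trans hX.closure_eq.subset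
    exact fun _ ⟨a, ha, hae⟩ => ⟨a, ha, hae ▸ h.unit a⟩
  · exact subset_cl_of_bequiv fun a ha => ⟨_, mem_image_of_mem _ ha, (h.unit a).symm⟩

theorem cl_image2_rightResidual_subset (h : IsBunchMonoid op e) {A B F G : Set Bunch}
    (hAF : A ⊆ F) :
    cl (image2 op (cl (image2 op A B)) (rightResidual op F G)) ⊆ cl (image2 op B G) := by
  rw [h.cl_image2_cl_left]
  refine cl.le_closure_iff.1 (subset_cl_of_bequiv ?_)
  rintro _ ⟨_, ⟨a, ha, b, hb, rfl⟩, w, hw, rfl⟩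
  refine ⟨_, mem_image2_of_mem hb (hw a (hAF ha)), ?_⟩
  exact (h.comm _ w).trans ((h.assoc w a b).trans (h.comm _ b))

theorem cl_image2_biUnion_subset_left (h : IsBunchMonoid op e) {S X : Set Bunch}
    {F : Bunch → Set Bunch} (hS : S ⊆ cl (⋃ x ∈ X, F x)) (G : Set Bunch) :
    cl (image2 op S G) ⊆ cl (⋃ x ∈ X, cl (image2 op (F x) G)) :=
  calc cl (image2 op S G) ⊆ cl (image2 op (cl (⋃ x ∈ X, F x)) G) :=
        cl.monotone (image2_subset_right hS)
    _ = cl (⋃ x ∈ X, image2 op (F x) G) := by rw [h.cl_image2_cl_left, image2_iUnion₂_left]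
    _ ⊆ cl (⋃ x ∈ X, cl (image2 op (F x) G)) :=
        cl.monotone (iUnion₂_mono fun _ _ => cl.le_closure _)

theorem cl_image2_biUnion_subset_right (h : IsBunchMonoid op e) {S X : Set Bunch}
    {F : Bunch → Set Bunch} (hS : S ⊆ cl (⋃ x ∈ X, F x)) (G : Set Bunch) :
    cl (image2 op G S) ⊆ cl (⋃ x ∈ X, cl (image2 op G (F x))) := by
  simpa only [h.cl_image2_comm G] using h.cl_image2_biUnion_subset_left hS G

end IsBunchMonoid

theorem cl_image2_semic_subset {X : Set Bunch} (hX : cl.IsClosed X) (Y : Set Bunch) :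
    cl (image2 .semic X Y) ⊆ X := by
  refine ClosureOperator.closure_min (image2_subset_iff.2 fun a ha b _ => ?_) hX
  exact mem_of_mem_cl_singleton hX (fun C _ hχ => .weaken C (hχ _ rfl)) ha

theorem subset_cl_image2_semic_self (X : Set Bunch) : X ⊆ cl (image2 .semic X X) :=
  fun _ ha => mem_of_mem_cl_singleton (cl.isClosed_closure _)
    (fun C _ hχ => .contract C (hχ _ rfl)) (cl.le_closure _ (mem_image2_of_mem ha ha))

def Frml.sem : Frml → Set Bunch
  | .atom a => antecedents (.atom a)
  | .top => cl {.aempty}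
  | .bot => cl ∅
  | .emp => cl {.mempty}
  | .and φ ψ => cl (image2 .semic φ.sem ψ.sem)
  | .or φ ψ => cl (φ.sem ∪ ψ.sem)
  | .imp φ ψ => rightResidual .semic φ.sem ψ.sem
  | .sep φ ψ => cl (image2 .comma φ.sem ψ.sem)
  | .wand φ ψ => rightResidual .comma φ.sem ψ.sem

theorem Frml.isClosed_sem (φ : Frml) : cl.IsClosed φ.sem := by
  induction φ with
  | atom _ => exact isClosed_antecedents _
  | imp φ _ _ ih => exact isBunchMonoid_semic.isClosed_rightResidual φ.sem ih
  | wand φ _ _ ih => exact isBunchMonoid_comma.isClosed_rightResidual φ.sem ih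
  | _ => exact cl.isClosed_closure _

def BCtx.sem : BCtx → Set Bunch → Set Bunch
  | .hole, X => X
  | .commaL C Γ, X => cl (image2 .comma (C.sem X) Γ.collapse.sem)
  | .commaR Γ C, X => cl (image2 .comma Γ.collapse.sem (C.sem X))
  | .semicL C Γ, X => cl (image2 .semic (C.sem X) Γ.collapse.sem)
  | .semicR Γ C, X => cl (image2 .semic Γ.collapse.sem (C.sem X))

theorem BCtx.sem_collapse_fill (C : BCtx) (Δ : Bunch) :
    (C.fill Δ).collapse.sem = C.sem Δ.collapse.sem := by
  induction C <;> simp [BCtx.fill, BCtx.sem, Bunch.collapse, Frml.sem, *]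

theorem BCtx.sem_mono (C : BCtx) : Monotone C.sem := by
  induction C with
  | hole => exact monotone_id
  | commaL C Γ ih => exact fun _ _ hXY => cl.monotone (image2_subset_right (ih hXY))
  | commaR Γ C ih => exact fun _ _ hXY => cl.monotone (image2_subset_left (ih hXY))
  | semicL C Γ ih => exact fun _ _ hXY => cl.monotone (image2_subset_right (ih hXY))
  | semicR Γ C ih => exact fun _ _ hXY => cl.monotone (image2_subset_left (ih hXY))

theorem BCtx.sem_cl_subset (C : BCtx) (X : Set Bunch) :
    C.sem (cl X) ⊆ cl (⋃ x ∈ X, C.sem {x}) := by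
  induction C with
  | hole => simp [BCtx.sem]
  | commaL C Γ ih => exact isBunchMonoid_comma.cl_image2_biUnion_subset_left ih _
  | commaR Γ C ih => exact isBunchMonoid_comma.cl_image2_biUnion_subset_right ih _
  | semicL C Γ ih => exact isBunchMonoid_semic.cl_image2_biUnion_subset_left ih _
  | semicR Γ C ih => exact isBunchMonoid_semic.cl_image2_biUnion_subset_right ih _

theorem BEquiv.sem_collapse_eq {Δ Δ' : Bunch} (h : BEquiv Δ Δ') :
    Δ.collapse.sem = Δ'.collapse.sem := by
  induction h with
  | refl => rfl
  | symm _ ih => exact ih.symm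
  | trans _ _ ih₁ ih₂ => exact ih₁.trans ih₂
  | commaComm => exact isBunchMonoid_comma.cl_image2_comm _ _
  | semicComm => exact isBunchMonoid_semic.cl_image2_comm _ _
  | commaAssoc => exact isBunchMonoid_comma.cl_image2_assoc _ _ _
  | semicAssoc => exact isBunchMonoid_semic.cl_image2_assoc _ _ _
  | commaUnit => exact isBunchMonoid_comma.cl_image2_unit (Frml.isClosed_sem _)
  | semicUnit => exact isBunchMonoid_semic.cl_image2_unit (Frml.isClosed_sem _)
  | ctx C _ ih => rw [C.sem_collapse_fill, C.sem_collapse_fill, ih]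

theorem ProvesC.sem_subset {Δ : Bunch} {φ : Frml} (h : ProvesC Δ φ) :
    Δ.collapse.sem ⊆ φ.sem := by
  induction h with
  | ax | empR | topR => exact subset_rfl
  | equiv _ e ih => exact e.sem_collapse_eq ▸ ih
  | empL C _ ih | sepL C _ ih | topL C _ ih | andL C _ ih =>
      rwa [C.sem_collapse_fill] at ih ⊢
  | weaken C _ ih =>
      rw [C.sem_collapse_fill] at ih ⊢
      exact (C.sem_mono (cl_image2_semic_subset (Frml.isClosed_sem _) _)).trans ih
  | contract C _ ih =>
      rw [C.sem_collapse_fill] at ih ⊢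
      exact (C.sem_mono (subset_cl_image2_semic_self _)).trans ih
  | sepR _ _ ih₁ ih₂ | andR _ _ ih₁ ih₂ => exact cl.monotone (image2_subset ih₁ ih₂)
  | wandR _ ih | impR _ ih => exact subset_rightResidual ih
  | wandL C _ _ ih₁ ih₂ =>
      rw [C.sem_collapse_fill] at ih₂ ⊢
      exact (C.sem_mono (isBunchMonoid_comma.cl_image2_rightResidual_subset ih₁)).trans ih₂
  | impL C _ _ ih₁ ih₂ =>
      rw [C.sem_collapse_fill] at ih₂ ⊢
      exact (C.sem_mono (isBunchMonoid_semic.cl_image2_rightResidual_subset ih₁)).trans ih₂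
  | botL C =>
      rw [C.sem_collapse_fill]
      refine (C.sem_cl_subset ∅).trans (ClosureOperator.closure_min ?_ (Frml.isClosed_sem _))
      simp
  | orR1 _ ih => exact ih.trans (subset_union_left.trans (cl.le_closure _))
  | orR2 _ ih => exact ih.trans (subset_union_right.trans (cl.le_closure _))
  | orL C _ _ ih₁ ih₂ =>
      rw [C.sem_collapse_fill] at ih₁ ih₂ ⊢
      refine (C.sem_cl_subset _).trans (ClosureOperator.closure_min ?_ (Frml.isClosed_sem _))
      refine iUnion₂_subset fun x hx => ?_
      rcases hx with hx | hx
      · exact (C.sem_mono (singleton_subset_iff.2 hx)).trans ih₁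
      · exact (C.sem_mono (singleton_subset_iff.2 hx)).trans ih₂
  | cut C _ _ ih₁ ih₂ =>
      rw [C.sem_collapse_fill] at ih₂ ⊢
      exact (C.sem_mono ih₁).trans ih₂

theorem imp_semic_mem_cl_singleton {Δ : Bunch} {φ ψ : Frml} (h : Proves Δ φ) :
    Bunch.semic (.frml (.imp φ ψ)) Δ ∈ cl {.frml ψ} := fun C _ hχ =>
  .equiv (.impL C (Δ₂ := .aempty) h
      (.equiv (hχ _ rfl) (.ctx C ((BEquiv.semicComm _ _).trans (.semicUnit _)))))
    (.ctx C ((BEquiv.semicComm _ _).trans (.ctx (.semicL .hole _) (BEquiv.semicUnit Δ).symm)))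

theorem wand_comma_mem_cl_singleton {Δ : Bunch} {φ ψ : Frml} (h : Proves Δ φ) :
    Bunch.comma (.frml (.wand φ ψ)) Δ ∈ cl {.frml ψ} := fun C _ hχ =>
  .equiv (.wandL C (Δ₂ := .mempty) h
      (.equiv (hχ _ rfl) (.ctx C ((BEquiv.commaComm _ _).trans (.commaUnit _)))))
    (.ctx C ((BEquiv.commaComm _ _).trans (.ctx (.commaL .hole _) (BEquiv.commaUnit Δ).symm)))

theorem Frml.okada (φ : Frml) : Bunch.frml φ ∈ φ.sem ∧ φ.sem ⊆ antecedents φ := by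
  induction φ with
  | atom a => exact ⟨.ax a, subset_rfl⟩
  | top =>
      exact ⟨fun C _ hχ => .topL C (hχ _ rfl),
        cl_subset_antecedents (singleton_subset_iff.2 .topR)⟩
  | bot => exact ⟨fun C _ _ => .botL C, cl_subset_antecedents (empty_subset _)⟩
  | emp =>
      exact ⟨fun C _ hχ => .empL C (hχ _ rfl),
        cl_subset_antecedents (singleton_subset_iff.2 .empR)⟩
  | and φ ψ ihφ ihψ =>
      exact ⟨fun C _ hχ => .andL C (hχ _ (mem_image2_of_mem ihφ.1 ihψ.1)),
        cl_subset_antecedents <| image2_subset_iff.2 fun _ ha _ hb =>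
          .andR (ihφ.2 ha) (ihψ.2 hb)⟩
  | sep φ ψ ihφ ihψ =>
      exact ⟨fun C _ hχ => .sepL C (hχ _ (mem_image2_of_mem ihφ.1 ihψ.1)),
        cl_subset_antecedents <| image2_subset_iff.2 fun _ ha _ hb =>
          .sepR (ihφ.2 ha) (ihψ.2 hb)⟩
  | or φ ψ ihφ ihψ =>
      exact ⟨fun C _ hχ => .orL C (hχ _ (.inl ihφ.1)) (hχ _ (.inr ihψ.1)),
        cl_subset_antecedents <| union_subset (fun _ h => .orR1 (ihφ.2 h))
          fun _ h => .orR2 (ihψ.2 h)⟩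
  | imp φ ψ ihφ ihψ =>
      exact ⟨fun _ ha => mem_of_mem_cl_singleton ψ.isClosed_sem
          (imp_semic_mem_cl_singleton (ihφ.2 ha)) ihψ.1,
        fun _ hΔ => .impR (ihψ.2 (hΔ _ ihφ.1))⟩
  | wand φ ψ ihφ ihψ =>
      exact ⟨fun _ ha => mem_of_mem_cl_singleton ψ.isClosed_sem
          (wand_comma_mem_cl_singleton (ihφ.2 ha)) ihψ.1,
        fun _ hΔ => .wandR (ihψ.2 (hΔ _ ihφ.1))⟩

theorem Bunch.mem_sem_collapse (Δ : Bunch) : Δ ∈ Δ.collapse.sem := by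
  induction Δ with
  | frml φ => exact φ.okada.1
  | mempty | aempty => exact cl.le_closure _ rfl
  | comma _ _ ih₁ ih₂ | semic _ _ ih₁ ih₂ =>
      exact cl.le_closure _ (mem_image2_of_mem ih₁ ih₂)

theorem Proves.toProvesC {Δ : Bunch} {φ : Frml} (h : Proves Δ φ) : ProvesC Δ φ := by
  induction h with
  | ax a => exact .ax a
  | equiv _ e ih => exact .equiv ih e
  | weaken C _ ih => exact .weaken C ih
  | contract C _ ih => exact .contract C ih
  | empR => exact .empR
  | empL C _ ih => exact .empL C ih
  | sepR _ _ ih₁ ih₂ => exact .sepR ih₁ ih₂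
  | sepL C _ ih => exact .sepL C ih
  | wandR _ ih => exact .wandR ih
  | wandL C _ _ ih₁ ih₂ => exact .wandL C ih₁ ih₂
  | topR => exact .topR
  | topL C _ ih => exact .topL C ih
  | andR _ _ ih₁ ih₂ => exact .andR ih₁ ih₂
  | andL C _ ih => exact .andL C ih
  | impR _ ih => exact .impR ih
  | impL C _ _ ih₁ ih₂ => exact .impL C ih₁ ih₂
  | botL C => exact .botL C
  | orR1 _ ih => exact .orR1 ih
  | orR2 _ ih => exact .orR2 ih
  | orL C _ _ ih₁ ih₂ => exact .orL C ih₁ ih₂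

theorem ProvesC.toProves {Δ : Bunch} {φ : Frml} (h : ProvesC Δ φ) : Proves Δ φ :=
  φ.okada.2 (h.sem_subset Δ.mem_sem_collapse)

/-- the cut rule is admissible in the cut-free fragment of BI:
if `Δ ⊢cf ψ` and `Γ(ψ) ⊢cf φ` then `Γ(Δ) ⊢cf φ`; consequently, every sequent
derivable with cut is derivable without cut. -/
theorem cut_admissible :
    (∀ (Γ : BCtx) (Δ : Bunch) (φ ψ : Frml),
      Proves Δ ψ → Proves (Γ.fill (.frml ψ)) φ → Proves (Γ.fill Δ) φ) ∧
    (∀ (Δ : Bunch) (φ : Frml), ProvesC Δ φ → Proves Δ φ) :=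
  ⟨fun Γ _ _ _ h₁ h₂ => (ProvesC.cut Γ h₁.toProvesC h₂.toProvesC).toProves,
    fun _ _ h => h.toProves⟩
end

section
/- Let T be a linear bunched term in variables x₁,…,xₙ (each variable occurring at most once), interpreted in the BI algebra C of closed sets of bunches by replacing ',' with * and ';' with ∧. Then for all closed sets X₁,…,Xₙ: [[T]](X₁,…,Xₙ) = cl({T[Δ₁,…,Δₙ] | Δᵢ ∈ Xᵢ for all i}), where T[Δ⃗] substitutes bunches for variables. -/
/-- The principal closed set `⟦φ⟧ = {Δ | Δ ⊢cf φ}`. -/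
def pr (φ : Frml) : Set Bunch := {Δ | Proves Δ φ}

/-- The Moore closure generated by the principal sets:
`cl X = ⋂ {⟦φ⟧ | X ⊆ ⟦φ⟧}`. -/
def clB (X : Set Bunch) : Set Bunch := ⋂₀ {Y | ∃ φ : Frml, Y = pr φ ∧ X ⊆ Y}

/-- A set of bunches is closed if it is a fixpoint of the closure operator. -/
def ClosedB (X : Set Bunch) : Prop := clB X = X

/-- Bunched terms: trees built from `','`, `';'` and variables. -/
inductive BTerm : Type
  | var : Nat → BTerm
  | comma : BTerm → BTerm → BTerm
  | semic : BTerm → BTerm → BTerm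

/-- Substituting bunches for the variables of a bunched term. -/
def BTerm.subst : BTerm → (Nat → Bunch) → Bunch
  | .var i, Δ => Δ i
  | .comma t u, Δ => Bunch.comma (t.subst Δ) (u.subst Δ)
  | .semic t u, Δ => Bunch.semic (t.subst Δ) (u.subst Δ)

/-- Number of occurrences of a variable in a bunched term. -/
def BTerm.occ : BTerm → Nat → Nat
  | .var j, i => if j = i then 1 else 0
  | .comma t u, i => t.occ i + u.occ i
  | .semic t u, i => t.occ i + u.occ i

/-- A bunched term is linear if every variable occurs at most once. -/
def BTerm.Linear (t : BTerm) : Prop := ∀ i, t.occ i ≤ 1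

/-- Interpretation of a bunched term in the BI algebra `C` of closed sets of
bunches, replacing `','` by `*` and `';'` by `∧`. -/
def BTerm.interpC : BTerm → (Nat → Set Bunch) → Set Bunch
  | .var i, X => X i
  | .comma t u, X =>
      clB {b | ∃ Δ ∈ t.interpC X, ∃ Δ' ∈ u.interpC X, b = Bunch.comma Δ Δ'}
  | .semic t u, X =>
      clB {b | ∃ Δ ∈ t.interpC X, ∃ Δ' ∈ u.interpC X, b = Bunch.semic Δ Δ'}

/-!
The closure `cl` is a nucleus for both `,` and `;`: `cl (cl A * cl B) = cl (A * B)`, and likewise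
for `;`. The nontrivial inclusion uses residuation, `Δ, Δ' ⊢ φ` iff `Δ ⊢ ⟨Δ'⟩ -* φ` (and
`Δ; Δ' ⊢ φ` iff `Δ ⊢ ⟨Δ'⟩ → φ`), whose backward direction needs the invertibility of the right
rules for `-*`, `→` and of the left rules for `I`, `⊤`, `*`, `∧`. The left rules are inverted by
replacing every occurrence of the principal formula at once, which commutes with all rules
including contraction. Given the nucleus property, induction on `T` proves the theorem: by
linearity the two subterms of `T` use disjoint variables, so independent substitutions into them
combine into one substitution into `T`.
-/

open Set

namespace BCtx

def comp_s18 : BCtx → BCtx → BCtx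
  | .hole, D => D
  | .commaL C Γ, D => .commaL (C.comp_s18 D) Γ
  | .commaR Γ C, D => .commaR Γ (C.comp_s18 D)
  | .semicL C Γ, D => .semicL (C.comp_s18 D) Γ
  | .semicR Γ C, D => .semicR Γ (C.comp_s18 D)

theorem fill_comp_s18 (C D : BCtx) (Δ : Bunch) : (C.comp_s18 D).fill Δ = C.fill (D.fill Δ) := by
  induction C <;> simp [comp_s18, fill, *]

end BCtx

def LeftAdmissible (Δ Δ' : Bunch) : Prop :=
  ∀ (C : BCtx) (φ : Frml), Proves (C.fill Δ) φ → Proves (C.fill Δ') φ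

namespace LeftAdmissible

theorem refl (Δ : Bunch) : LeftAdmissible Δ Δ := fun _ _ h => h

theorem trans {Δ₁ Δ₂ Δ₃ : Bunch} (h₁₂ : LeftAdmissible Δ₁ Δ₂) (h₂₃ : LeftAdmissible Δ₂ Δ₃) :
    LeftAdmissible Δ₁ Δ₃ :=
  fun C φ h => h₂₃ C φ (h₁₂ C φ h)

theorem fill {Δ Δ' : Bunch} (h : LeftAdmissible Δ Δ') (D : BCtx) :
    LeftAdmissible (D.fill Δ) (D.fill Δ') := by
  intro C φ hC
  rw [← BCtx.fill_comp_s18] at hC ⊢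
  exact h _ φ hC

end LeftAdmissible

theorem Bunch.leftAdmissible_collapse (Δ : Bunch) : LeftAdmissible Δ (.frml Δ.collapse) := by
  induction Δ with
  | frml φ => exact .refl _
  | mempty => exact fun C _ => .empL C
  | aempty => exact fun C _ => .topL C
  | comma Δ₁ Δ₂ ih₁ ih₂ =>
    exact ((ih₁.fill (.commaL .hole Δ₂)).trans (ih₂.fill (.commaR _ .hole))).trans
      fun C _ => .sepL C
  | semic Δ₁ Δ₂ ih₁ ih₂ =>
    exact ((ih₁.fill (.semicL .hole Δ₂)).trans (ih₂.fill (.semicR _ .hole))).trans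
      fun C _ => .andL C

/-- The principal formulas `ξ` of the invertible left rules, with the bunch `e` that replaces `ξ`
in the premise. -/
inductive InvertibleLeft : Frml → Bunch → Prop
  | emp : InvertibleLeft .emp .mempty
  | top : InvertibleLeft .top .aempty
  | sep (φ ψ : Frml) : InvertibleLeft (.sep φ ψ) (.comma (.frml φ) (.frml ψ))
  | and (φ ψ : Frml) : InvertibleLeft (.and φ ψ) (.semic (.frml φ) (.frml ψ))

theorem InvertibleLeft.leftAdmissible {ξ : Frml} {e : Bunch} (h : InvertibleLeft ξ e) :
    LeftAdmissible e (.frml ξ) := by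
  cases h with
  | emp => exact fun C _ => .empL C
  | top => exact fun C _ => .topL C
  | sep => exact fun C _ => .sepL C
  | and => exact fun C _ => .andL C

theorem InvertibleLeft.unique {ξ : Frml} {e e' : Bunch} (h : InvertibleLeft ξ e)
    (h' : InvertibleLeft ξ e') : e = e' := by
  cases h <;> cases h' <;> rfl

section Replace

variable {ξ : Frml} {e : Bunch}

open Classical in
noncomputable def Bunch.replace : Bunch → Frml → Bunch → Bunch
  | .frml φ, ξ, e => if φ = ξ then e else .frml φ
  | .mempty, _, _ => .mempty
  | .aempty, _, _ => .aempty
  | .comma Δ₁ Δ₂, ξ, e => .comma (Δ₁.replace ξ e) (Δ₂.replace ξ e)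
  | .semic Δ₁ Δ₂, ξ, e => .semic (Δ₁.replace ξ e) (Δ₂.replace ξ e)

noncomputable def BCtx.replace : BCtx → Frml → Bunch → BCtx
  | .hole, _, _ => .hole
  | .commaL C Γ, ξ, e => .commaL (C.replace ξ e) (Γ.replace ξ e)
  | .commaR Γ C, ξ, e => .commaR (Γ.replace ξ e) (C.replace ξ e)
  | .semicL C Γ, ξ, e => .semicL (C.replace ξ e) (Γ.replace ξ e)
  | .semicR Γ C, ξ, e => .semicR (Γ.replace ξ e) (C.replace ξ e)

@[simp]
theorem Bunch.replace_frml_self : (Bunch.frml ξ).replace ξ e = e := by simp [Bunch.replace]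

@[simp]
theorem Bunch.replace_frml_of_ne {φ : Frml} (h : φ ≠ ξ) :
    (Bunch.frml φ).replace ξ e = .frml φ := by
  simp [Bunch.replace, h]

@[simp]
theorem BCtx.replace_fill (C : BCtx) (Δ : Bunch) :
    (C.fill Δ).replace ξ e = (C.replace ξ e).fill (Δ.replace ξ e) := by
  induction C <;> simp [BCtx.fill, BCtx.replace, Bunch.replace, *]

theorem BEquiv.replace {Δ Δ' : Bunch} (h : BEquiv Δ Δ') :
    BEquiv (Δ.replace ξ e) (Δ'.replace ξ e) := by
  induction h with
  | refl Δ => exact .refl _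
  | symm _ ih => exact .symm ih
  | trans _ _ ih₁ ih₂ => exact .trans ih₁ ih₂
  | commaComm => exact .commaComm _ _
  | semicComm => exact .semicComm _ _
  | commaAssoc => exact .commaAssoc _ _ _
  | semicAssoc => exact .semicAssoc _ _ _
  | commaUnit => exact .commaUnit _
  | semicUnit => exact .semicUnit _
  | ctx C _ ih => simpa only [BCtx.replace_fill] using .ctx _ ih

theorem InvertibleLeft.replace_self (h : InvertibleLeft ξ e) : e.replace ξ e = e := by
  cases h with
  | emp | top => rfl
  | sep φ ψ | and φ ψ =>
    -- `φ` and `ψ` are smaller than `ξ`, so they are not replaced.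
    simp only [Bunch.replace]
    split_ifs with h₁ h₂ h₂ <;>
      first | rfl | (have := congrArg sizeOf ‹_ = _›; simp at this <;> omega)

theorem Bunch.leftAdmissible_replace (hξ : InvertibleLeft ξ e) (Γ : Bunch) :
    LeftAdmissible (Γ.replace ξ e) Γ := by
  induction Γ with
  | frml φ =>
    by_cases hφ : φ = ξ
    · subst hφ; rw [replace_frml_self]; exact hξ.leftAdmissible
    · rw [replace_frml_of_ne hφ]; exact .refl _
  | mempty | aempty => exact .refl _
  | comma Γ₁ Γ₂ ih₁ ih₂ =>
    exact (ih₁.fill (.commaL .hole _)).trans (ih₂.fill (.commaR Γ₁ .hole))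
  | semic Γ₁ Γ₂ ih₁ ih₂ =>
    exact (ih₁.fill (.semicL .hole _)).trans (ih₂.fill (.semicR Γ₁ .hole))

theorem Proves.replace_fill_of_invertibleLeft (hξ : InvertibleLeft ξ e) {ψ : Frml} {P : Bunch}
    (hψ : InvertibleLeft ψ P) {C : BCtx} {χ : Frml} (h : Proves ((C.fill P).replace ξ e) χ) :
    Proves ((C.fill (.frml ψ)).replace ξ e) χ := by
  rw [BCtx.replace_fill] at h ⊢
  have hP := Bunch.leftAdmissible_replace hξ P _ _ h
  by_cases hψξ : ψ = ξ
  · subst hψξ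
    obtain rfl := hψ.unique hξ
    rwa [Bunch.replace_frml_self]
  · rw [Bunch.replace_frml_of_ne hψξ]; exact hψ.leftAdmissible _ _ hP

theorem Proves.replace (hξ : InvertibleLeft ξ e) {Γ : Bunch} {φ : Frml} (h : Proves Γ φ) :
    Proves (Γ.replace ξ e) φ := by
  have fixed (ψ : Frml) (hψ : ∀ P, ¬ InvertibleLeft ψ P) : (Bunch.frml ψ).replace ξ e = .frml ψ :=
    Bunch.replace_frml_of_ne (by rintro rfl; exact hψ e hξ)
  have restore := Bunch.leftAdmissible_replace hξ
  induction h with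
  | ax a =>
    rw [fixed (.atom a) fun _ h => nomatch h]; exact .ax a
  | equiv _ he ih => exact .equiv ih he.replace
  | weaken C _ ih => simp only [BCtx.replace_fill] at ih ⊢; exact .weaken _ ih
  | contract C _ ih => simp only [BCtx.replace_fill] at ih ⊢; exact .contract _ ih
  | empR => exact .empR
  | topR => exact .topR
  | empL _ _ ih => exact replace_fill_of_invertibleLeft hξ .emp ih
  | topL _ _ ih => exact replace_fill_of_invertibleLeft hξ .top ih
  | sepL _ _ ih => exact replace_fill_of_invertibleLeft hξ (.sep _ _) ih
  | andL _ _ ih => exact replace_fill_of_invertibleLeft hξ (.and _ _) ih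
  | sepR _ _ ih₁ ih₂ => exact .sepR ih₁ ih₂
  | andR _ _ ih₁ ih₂ => exact .andR ih₁ ih₂
  | orR1 _ ih => exact .orR1 ih
  | orR2 _ ih => exact .orR2 ih
  | wandR _ ih => exact .wandR (restore _ (.commaR _ .hole) _ ih)
  | impR _ ih => exact .impR (restore _ (.semicR _ .hole) _ ih)
  | wandL C _ _ ih₁ ih₂ =>
    rw [BCtx.replace_fill] at ih₂ ⊢
    rw [Bunch.replace, fixed (.wand _ _) fun _ h => nomatch h]
    exact .wandL _ ih₁ ((restore _).fill (.commaR _ .hole) _ _ ih₂)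
  | impL C _ _ ih₁ ih₂ =>
    rw [BCtx.replace_fill] at ih₂ ⊢
    rw [Bunch.replace, fixed (.imp _ _) fun _ h => nomatch h]
    exact .impL _ ih₁ ((restore _).fill (.semicR _ .hole) _ _ ih₂)
  | botL C =>
    rw [BCtx.replace_fill, fixed .bot fun _ h => nomatch h]; exact .botL _
  | orL C _ _ ih₁ ih₂ =>
    rw [BCtx.replace_fill] at ih₁ ih₂ ⊢
    rw [fixed (.or _ _) fun _ h => nomatch h]
    exact .orL _ (restore _ _ _ ih₁) (restore _ _ _ ih₂)

theorem InvertibleLeft.leftAdmissible_inv (hξ : InvertibleLeft ξ e) :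
    LeftAdmissible (.frml ξ) e := by
  intro C φ h
  have hrep : (C.fill (.frml ξ)).replace ξ e = (C.fill e).replace ξ e := by
    rw [BCtx.replace_fill, BCtx.replace_fill, hξ.replace_self, Bunch.replace_frml_self]
  exact Bunch.leftAdmissible_replace hξ (C.fill e) .hole φ (hrep ▸ h.replace hξ)

end Replace

theorem Bunch.leftAdmissible_collapse_inv (Δ : Bunch) : LeftAdmissible (.frml Δ.collapse) Δ := by
  induction Δ with
  | frml φ => exact .refl _
  | mempty => exact InvertibleLeft.emp.leftAdmissible_inv
  | aempty => exact InvertibleLeft.top.leftAdmissible_inv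
  | comma Δ₁ Δ₂ ih₁ ih₂ =>
    exact (InvertibleLeft.sep _ _).leftAdmissible_inv.trans
      ((ih₁.fill (.commaL .hole _)).trans (ih₂.fill (.commaR Δ₁ .hole)))
  | semic Δ₁ Δ₂ ih₁ ih₂ =>
    exact (InvertibleLeft.and _ _).leftAdmissible_inv.trans
      ((ih₁.fill (.semicL .hole _)).trans (ih₂.fill (.semicR Δ₁ .hole)))

theorem Proves.wand_inv {Γ : Bunch} {χ φ ψ : Frml} (h : Proves Γ χ) (hχ : χ = .wand φ ψ) :
    Proves (.comma Γ (.frml φ)) ψ := by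
  induction h with
  | wandR h => cases hχ; exact h
  | equiv _ he ih => exact .equiv (ih hχ) (.ctx (.commaL .hole _) he)
  | weaken C _ ih => exact .weaken (.commaL C _) (ih hχ)
  | contract C _ ih => exact .contract (.commaL C _) (ih hχ)
  | empL C _ ih => exact .empL (.commaL C _) (ih hχ)
  | topL C _ ih => exact .topL (.commaL C _) (ih hχ)
  | sepL C _ ih => exact .sepL (.commaL C _) (ih hχ)
  | andL C _ ih => exact .andL (.commaL C _) (ih hχ)
  | wandL C h₁ _ _ ih => exact .wandL (.commaL C _) h₁ (ih hχ)
  | impL C h₁ _ _ ih => exact .impL (.commaL C _) h₁ (ih hχ)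
  | botL C => exact .botL (.commaL C _)
  | orL C _ _ ih₁ ih₂ => exact .orL (.commaL C _) (ih₁ hχ) (ih₂ hχ)
  | ax | empR | sepR | topR | andR | impR | orR1 | orR2 => cases hχ

theorem Proves.imp_inv {Γ : Bunch} {χ φ ψ : Frml} (h : Proves Γ χ) (hχ : χ = .imp φ ψ) :
    Proves (.semic Γ (.frml φ)) ψ := by
  induction h with
  | impR h => cases hχ; exact h
  | equiv _ he ih => exact .equiv (ih hχ) (.ctx (.semicL .hole _) he)
  | weaken C _ ih => exact .weaken (.semicL C _) (ih hχ)
  | contract C _ ih => exact .contract (.semicL C _) (ih hχ)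
  | empL C _ ih => exact .empL (.semicL C _) (ih hχ)
  | topL C _ ih => exact .topL (.semicL C _) (ih hχ)
  | sepL C _ ih => exact .sepL (.semicL C _) (ih hχ)
  | andL C _ ih => exact .andL (.semicL C _) (ih hχ)
  | wandL C h₁ _ _ ih => exact .wandL (.semicL C _) h₁ (ih hχ)
  | impL C h₁ _ _ ih => exact .impL (.semicL C _) h₁ (ih hχ)
  | botL C => exact .botL (.semicL C _)
  | orL C _ _ ih₁ ih₂ => exact .orL (.semicL C _) (ih₁ hχ) (ih₂ hχ)
  | ax | empR | sepR | topR | andR | wandR | orR1 | orR2 => cases hχ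

theorem proves_comma_iff {Δ Δ' : Bunch} {φ : Frml} :
    Proves (.comma Δ Δ') φ ↔ Proves Δ (.wand Δ'.collapse φ) :=
  ⟨fun h => .wandR (Δ'.leftAdmissible_collapse (.commaR Δ .hole) φ h),
    fun h => Δ'.leftAdmissible_collapse_inv (.commaR Δ .hole) φ (h.wand_inv rfl)⟩

theorem proves_semic_iff {Δ Δ' : Bunch} {φ : Frml} :
    Proves (.semic Δ Δ') φ ↔ Proves Δ (.imp Δ'.collapse φ) :=
  ⟨fun h => .impR (Δ'.leftAdmissible_collapse (.semicR Δ .hole) φ h),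
    fun h => Δ'.leftAdmissible_collapse_inv (.semicR Δ .hole) φ (h.imp_inv rfl)⟩

theorem mem_clB_iff {X : Set Bunch} {Δ : Bunch} :
    Δ ∈ clB X ↔ ∀ φ, X ⊆ pr φ → Proves Δ φ := by
  simp only [clB, mem_sInter, mem_ofPred_eq]
  exact ⟨fun h φ hX => h _ ⟨φ, rfl, hX⟩, by rintro h _ ⟨φ, rfl, hX⟩; exact h φ hX⟩

theorem clB_subset_pr {X : Set Bunch} {φ : Frml} (h : X ⊆ pr φ) : clB X ⊆ pr φ :=
  fun _ hΔ => mem_clB_iff.1 hΔ φ h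

theorem subset_clB (X : Set Bunch) : X ⊆ clB X :=
  fun _ hΔ => mem_clB_iff.2 fun _ hX => hX hΔ

theorem clB_mono {X Y : Set Bunch} (h : X ⊆ Y) : clB X ⊆ clB Y :=
  fun _ hΔ => mem_clB_iff.2 fun _ hY => mem_clB_iff.1 hΔ _ (h.trans hY)

theorem clB_subset_clB {X Y : Set Bunch} (h : X ⊆ clB Y) : clB X ⊆ clB Y :=
  fun _ hΔ => mem_clB_iff.2 fun _ hY => mem_clB_iff.1 hΔ _ (h.trans (clB_subset_pr hY))

theorem ClosedB.frml_bot_mem {X : Set Bunch} (hX : ClosedB X) : Bunch.frml .bot ∈ X :=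
  hX ▸ mem_clB_iff.2 fun _ _ => .botL .hole

def Residuated (op : Bunch → Bunch → Bunch) : Prop :=
  ∀ Δ' φ, ∃ ψ, ∀ Δ, Proves (op Δ Δ') φ ↔ Proves Δ ψ

theorem Residuated.proves_of_mem_clB {op : Bunch → Bunch → Bunch} (hop : Residuated op)
    {A : Set Bunch} {Δ Δ' : Bunch} {φ : Frml} (hΔ : Δ ∈ clB A)
    (h : ∀ a ∈ A, Proves (op a Δ') φ) : Proves (op Δ Δ') φ := by
  obtain ⟨ψ, hψ⟩ := hop Δ' φ
  exact (hψ Δ).2 (mem_clB_iff.1 hΔ ψ fun a ha => (hψ a).1 (h a ha))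

theorem Residuated.clB_image2_clB {op : Bunch → Bunch → Bunch} (hop : Residuated op)
    (hcomm : ∀ Δ Δ' φ, Proves (op Δ Δ') φ → Proves (op Δ' Δ) φ) (A B : Set Bunch) :
    clB (image2 op (clB A) (clB B)) = clB (image2 op A B) := by
  refine (clB_subset_clB ?_).antisymm (clB_mono (image2_subset (subset_clB A) (subset_clB B)))
  rintro _ ⟨Δ, hΔ, Δ', hΔ', rfl⟩
  refine mem_clB_iff.2 fun φ hAB => hop.proves_of_mem_clB hΔ fun a ha => ?_
  exact hcomm _ _ _ (hop.proves_of_mem_clB hΔ' fun b hb => hcomm _ _ _ (hAB ⟨a, ha, b, hb, rfl⟩))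

theorem residuated_comma : Residuated .comma :=
  fun _ _ => ⟨_, fun _ => proves_comma_iff⟩

theorem residuated_semic : Residuated .semic :=
  fun _ _ => ⟨_, fun _ => proves_semic_iff⟩

namespace BTerm

theorem subst_congr (t : BTerm) {Δ Δ' : Nat → Bunch} (h : ∀ i, 0 < t.occ i → Δ i = Δ' i) :
    t.subst Δ = t.subst Δ' := by
  induction t with
  | var j => exact h j (by simp [occ])
  | comma t u iht ihu | semic t u iht ihu =>
    simp only [subst]
    rw [iht fun i hi => h i (by simp only [occ]; omega),
      ihu fun i hi => h i (by simp only [occ]; omega)]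

theorem linear_left {t u : BTerm} (h : ∀ i, t.occ i + u.occ i ≤ 1) : t.Linear :=
  fun i => (Nat.le_add_right _ _).trans (h i)

theorem linear_right {t u : BTerm} (h : ∀ i, t.occ i + u.occ i ≤ 1) : u.Linear :=
  fun i => (Nat.le_add_left _ _).trans (h i)

theorem image2_image_subst (op : Bunch → Bunch → Bunch) {t u : BTerm}
    (h : ∀ i, t.occ i + u.occ i ≤ 1) (X : Nat → Set Bunch) :
    image2 op (t.subst '' univ.pi X) (u.subst '' univ.pi X) =
      (fun Δ => op (t.subst Δ) (u.subst Δ)) '' univ.pi X := by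
  ext b
  constructor
  · rintro ⟨_, ⟨Δ₁, hΔ₁, rfl⟩, _, ⟨Δ₂, hΔ₂, rfl⟩, rfl⟩
    classical
    refine ⟨{i | 0 < t.occ i}.piecewise Δ₁ Δ₂, piecewise_mem_pi _ hΔ₁ hΔ₂, ?_⟩
    dsimp only
    rw [t.subst_congr fun i hi => piecewise_eq_of_mem {i | 0 < t.occ i} Δ₁ Δ₂ hi,
      u.subst_congr fun i hi => piecewise_eq_of_notMem {i | 0 < t.occ i} Δ₁ Δ₂
        fun (hti : 0 < t.occ i) => by have := h i; omega]
  · rintro ⟨Δ, hΔ, rfl⟩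
    exact mem_image2_of_mem (mem_image_of_mem _ hΔ) (mem_image_of_mem _ hΔ)

theorem interpC_comma (t u : BTerm) (X : Nat → Set Bunch) :
    (comma t u).interpC X = clB (image2 .comma (t.interpC X) (u.interpC X)) := by
  simp only [interpC, image2, eq_comm]

theorem interpC_semic (t u : BTerm) (X : Nat → Set Bunch) :
    (semic t u).interpC X = clB (image2 .semic (t.interpC X) (u.interpC X)) := by
  simp only [interpC, image2, eq_comm]

theorem image_subst_var (i : Nat) {X : Nat → Set Bunch} (hX : ∀ i, ClosedB (X i)) :
    (var i).subst '' univ.pi X = X i :=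
  eval_image_univ_pi (univ_pi_nonempty_iff.2 fun j => ⟨_, (hX j).frml_bot_mem⟩)

theorem interpC_eq_clB_image {T : BTerm} (hT : T.Linear) {X : Nat → Set Bunch}
    (hX : ∀ i, ClosedB (X i)) : T.interpC X = clB (T.subst '' univ.pi X) := by
  induction T with
  | var i => rw [image_subst_var i hX, hX i]; rfl
  | comma t u iht ihu =>
    rw [interpC_comma, iht (linear_left hT), ihu (linear_right hT),
      residuated_comma.clB_image2_clB (fun _ _ _ h => .equiv h (.commaComm _ _)),
      image2_image_subst _ hT]
    rfl
  | semic t u iht ihu =>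
    rw [interpC_semic, iht (linear_left hT), ihu (linear_right hT),
      residuated_semic.clB_image2_clB (fun _ _ _ h => .equiv h (.semicComm _ _)),
      image2_image_subst _ hT]
    rfl

end BTerm

/-- for a linear bunched term `T` and closed sets `Xᵢ`,
`[[T]](X⃗) = cl {T[Δ⃗] | Δᵢ ∈ Xᵢ}`. -/
theorem linear_bterm_interp (T : BTerm) (hT : T.Linear)
    (X : Nat → Set Bunch) (hX : ∀ i, ClosedB (X i)) :
    T.interpC X = clB {b | ∃ Δ : Nat → Bunch, (∀ i, Δ i ∈ X i) ∧ b = T.subst Δ} := by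
  rw [BTerm.interpC_eq_clB_image hT hX]
  congr 1
  ext b
  simp [eq_comm]
end
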